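/- Let ⟨α, γ⟩ : S ⇄ T be a Galois insertion between c-semirings. If α is order-preserving (for any finite multisets I1, I2 in S, Π_{x∈I1} α(x) ≤ Π_{x∈I2} α(x) implies Π_{x∈I1} x ≤ Π_{x∈I2} x), then α is a semiring isomorphism, i.e., a bijective map preserving 0, 1, + and ×. -/

import Mathlib

structure CSemiring (S : Type*) where
  add : S → S → S
  mul : S → S → S
  zero : S
  one : S
  add_comm : ∀ a b, add a b = add b a
  add_assoc : ∀ a b c, add (add a b) c = add a (add b c)
  add_idem : ∀ a, add a a = a
  add_zero : ∀ a, add a zero = a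
  add_one : ∀ a, add a one = one
  mul_comm : ∀ a b, mul a b = mul b a
  mul_assoc : ∀ a b c, mul (mul a b) c = mul a (mul b c)
  mul_one : ∀ a, mul a one = a
  mul_zero : ∀ a, mul a zero = zero
  left_distrib : ∀ a b c, mul a (add b c) = add (mul a b) (mul a c)

/-- The induced order: `a ≤ b` iff `a + b = b`. -/
def CSemiring.le {S : Type*} (C : CSemiring S) (a b : S) : Prop := C.add a b = b

/-- Induced strict order. -/
def CSemiring.lt {S : Type*} (C : CSemiring S) (a b : S) : Prop := C.le a b ∧ a ≠ b

/-- Semiring homomorphism: preserves 0, 1, + and ×. -/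
def CSemiring.isHom {S T : Type*} (C : CSemiring S) (D : CSemiring T) (α : S → T) : Prop :=
  α C.zero = D.zero ∧ α C.one = D.one ∧
  (∀ a b, α (C.add a b) = D.add (α a) (α b)) ∧
  (∀ a b, α (C.mul a b) = D.mul (α a) (α b))

/-- Product over a list (finite multiset) of elements. -/
def CSemiring.listProd {S : Type*} (C : CSemiring S) (l : List S) : S := l.foldr C.mul C.one

/-- Product of a finite family. -/
def CSemiring.finProd {S : Type*} (C : CSemiring S) {m : ℕ} (f : Fin m → S) : S :=
  C.listProd (List.ofFn f)

/-- Sum of a finite family. -/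
def CSemiring.finSum {S : Type*} (C : CSemiring S) {n : ℕ} (f : Fin n → S) : S :=
  (List.ofFn f).foldr C.add C.zero

/-- Condition (Equation 1): for all positive m,n and families u,v,
if Σᵢ Πⱼ α(uᵢⱼ) < Σᵢ Πⱼ α(vᵢⱼ) in T then Σᵢ Πⱼ uᵢⱼ < Σᵢ Πⱼ vᵢⱼ in S. -/
def CSemiring.eq1Cond {S T : Type*} (C : CSemiring S) (D : CSemiring T) (α : S → T) : Prop :=
  ∀ (m n : ℕ), 0 < m → 0 < n → ∀ (u v : Fin n → Fin m → S),
    D.lt (D.finSum fun i => D.finProd fun j => α (u i j))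
         (D.finSum fun i => D.finProd fun j => α (v i j)) →
    C.lt (C.finSum fun i => C.finProd fun j => u i j)
         (C.finSum fun i => C.finProd fun j => v i j)

/-! Taking singleton lists in the order-preserving condition shows that `α` reflects the order,
so together with monotonicity and the surjectivity coming from `α ∘ γ = id`, `α` is an order
isomorphism. An order isomorphism of c-semirings preserves `0`, `1` and `+`, which are the
bottom, the top and the join of the induced order. Taking `[a, b]` against `[c]` with
`α c = α a × α b` shows that `α` also preserves `×`. -/

namespace CSemiring

section Order

variable {S : Type*} (C : CSemiring S)

theorem le_refl (a : S) : C.le a a := C.add_idem a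

variable {C} in
theorem le_antisymm {a b : S} (hab : C.le a b) (hba : C.le b a) : a = b := by
  unfold CSemiring.le at hab hba
  rw [← hba, C.add_comm, hab]

theorem le_add_left (a b : S) : C.le a (C.add a b) := by
  unfold CSemiring.le
  rw [← C.add_assoc, C.add_idem]

theorem le_add_right (a b : S) : C.le b (C.add a b) := by
  rw [C.add_comm]
  exact C.le_add_left b a

variable {C} in
theorem add_le {a b c : S} (hac : C.le a c) (hbc : C.le b c) : C.le (C.add a b) c := by
  unfold CSemiring.le at *
  rw [C.add_assoc, hbc, hac]

theorem zero_le (a : S) : C.le C.zero a := by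
  unfold CSemiring.le
  rw [C.add_comm, C.add_zero]

theorem le_one (a : S) : C.le a C.one := C.add_one a

@[simp]
theorem listProd_singleton (a : S) : C.listProd [a] = a := by
  simp [CSemiring.listProd, C.mul_one]

@[simp]
theorem listProd_pair (a b : S) : C.listProd [a, b] = C.mul a b := by
  simp [CSemiring.listProd, C.mul_one]

end Order

section OrderIso

variable {S T : Type*} {C : CSemiring S} {D : CSemiring T} {α : S → T}

theorem map_zero_of_monotone_of_surjective (hmono : ∀ a b, C.le a b → D.le (α a) (α b))
    (hsurj : Function.Surjective α) : α C.zero = D.zero := by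
  obtain ⟨c, hc⟩ := hsurj D.zero
  refine le_antisymm ?_ (D.zero_le _)
  simpa [hc] using hmono _ _ (C.zero_le c)

theorem map_one_of_monotone_of_surjective (hmono : ∀ a b, C.le a b → D.le (α a) (α b))
    (hsurj : Function.Surjective α) : α C.one = D.one := by
  obtain ⟨c, hc⟩ := hsurj D.one
  refine le_antisymm (D.le_one _) ?_
  simpa [hc] using hmono _ _ (C.le_one c)

theorem map_add_of_le_iff_of_surjective (hle : ∀ a b, D.le (α a) (α b) ↔ C.le a b)
    (hsurj : Function.Surjective α) (a b : S) : α (C.add a b) = D.add (α a) (α b) := by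
  have hge : D.le (D.add (α a) (α b)) (α (C.add a b)) :=
    add_le ((hle _ _).2 (C.le_add_left a b)) ((hle _ _).2 (C.le_add_right a b))
  obtain ⟨c, hc⟩ := hsurj (D.add (α a) (α b))
  refine le_antisymm ?_ hge
  have hac : C.le a c := (hle _ _).1 (hc ▸ D.le_add_left _ _)
  have hbc : C.le b c := (hle _ _).1 (hc ▸ D.le_add_right _ _)
  exact hc ▸ (hle _ _).2 (add_le hac hbc)

end OrderIso

section ReflectsProdOrder

variable {S T : Type*} (C : CSemiring S) (D : CSemiring T) (α : S → T)

/-- The order-preserving condition on `α`, with finite multisets represented by lists. -/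
def ReflectsProdOrder : Prop :=
  ∀ l1 l2 : List S, D.le (D.listProd (l1.map α)) (D.listProd (l2.map α)) →
    C.le (C.listProd l1) (C.listProd l2)

variable {C D α}

theorem ReflectsProdOrder.listProd_eq (h : ReflectsProdOrder C D α) {l1 l2 : List S}
    (heq : D.listProd (l1.map α) = D.listProd (l2.map α)) : C.listProd l1 = C.listProd l2 :=
  le_antisymm (h _ _ (heq ▸ D.le_refl _)) (h _ _ (heq ▸ D.le_refl _))

theorem ReflectsProdOrder.le_of_map_le (h : ReflectsProdOrder C D α) {a b : S}
    (hab : D.le (α a) (α b)) : C.le a b := by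
  simpa using h [a] [b] (by simpa using hab)

theorem ReflectsProdOrder.injective (h : ReflectsProdOrder C D α) : Function.Injective α :=
  fun a b hab => by simpa using h.listProd_eq (l1 := [a]) (l2 := [b]) (by simp [hab])

theorem ReflectsProdOrder.map_mul (h : ReflectsProdOrder C D α) (hsurj : Function.Surjective α)
    (a b : S) : α (C.mul a b) = D.mul (α a) (α b) := by
  obtain ⟨c, hc⟩ := hsurj (D.mul (α a) (α b))
  have hab : C.mul a b = c := by
    simpa using h.listProd_eq (l1 := [a, b]) (l2 := [c]) (by simp [hc])
  rw [hab, hc]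

end ReflectsProdOrder

end CSemiring

theorem stmt13_general {S T : Type*} (C : CSemiring S) (D : CSemiring T)
    (α : S → T) (γ : T → S)
    (monoα : ∀ a b, C.le a b → D.le (α a) (α b))
    (ins : ∀ y : T, α (γ y) = y)
    (op : ∀ l1 l2 : List S,
      D.le (D.listProd (l1.map α)) (D.listProd (l2.map α)) →
      C.le (C.listProd l1) (C.listProd l2)) :
    C.isHom D α ∧ Function.Bijective α := by
  have hop : C.ReflectsProdOrder D α := op
  have hsurj : Function.Surjective α := fun y => ⟨γ y, ins y⟩
  have hle : ∀ a b, D.le (α a) (α b) ↔ C.le a b := fun a b => ⟨hop.le_of_map_le, monoα a b⟩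
  exact ⟨⟨CSemiring.map_zero_of_monotone_of_surjective monoα hsurj,
    CSemiring.map_one_of_monotone_of_surjective monoα hsurj,
    CSemiring.map_add_of_le_iff_of_surjective hle hsurj, hop.map_mul hsurj⟩, hop.injective, hsurj⟩

theorem stmt13 {S T : Type*} (C : CSemiring S) (D : CSemiring T)
    (α : S → T) (γ : T → S)
    (monoα : ∀ a b, C.le a b → D.le (α a) (α b))
    (monoγ : ∀ a b, D.le a b → C.le (γ a) (γ b))
    (adj : ∀ (x : S) (y : T), D.le (α x) y ↔ C.le x (γ y))
    (ins : ∀ y : T, α (γ y) = y)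
    (op : ∀ l1 l2 : List S,
      D.le (D.listProd (l1.map α)) (D.listProd (l2.map α)) →
      C.le (C.listProd l1) (C.listProd l2)) :
    C.isHom D α ∧ Function.Bijective α :=
  stmt13_general C D α γ monoα ins op
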